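/- arXiv:2405.14461 — 4 statements merged into one kernel-verified Lean document; each statement's English description precedes it below -/
import Mathlib

section
/- Let α > 0 be a real constant and let a : ℝ → ℝ be differentiable at a time t with a(t) ≠ 0. Then the composition t ↦ sign(a(t))·|a(t)|^(|a(t)|^α) is differentiable at t with derivative |a(t)|^(|a(t)|^α + α − 1)·(1 + α·ln|a(t)|)·a'(t). -/
open Real Filter

theorem hasDerivAt_rpow_self_rpow (α : ℝ) {x : ℝ} (hx : 0 < x) :
    HasDerivAt (fun y : ℝ => y ^ y ^ α) (x ^ (x ^ α + α - 1) * (1 + α * log x)) x := by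
  have hexp : HasDerivAt (fun y : ℝ => y ^ α) (α * x ^ (α - 1)) x := by
    simpa using (hasDerivAt_id' x).rpow_const (p := α) (Or.inl hx.ne')
  convert (hasDerivAt_id' x).rpow hexp hx using 1
  have h₁ : x ^ α * x ^ (x ^ α - 1) = x ^ (x ^ α + α - 1) := by
    rw [← rpow_add hx]; ring_nf
  have h₂ : x ^ (α - 1) * x ^ x ^ α = x ^ (x ^ α + α - 1) := by
    rw [← rpow_add hx]; ring_nf
  linear_combination -h₁ - α * log x * h₂

theorem HasDerivAt.sign_mul_comp_abs {φ : ℝ → ℝ} {φ' x : ℝ} (hφ : HasDerivAt φ φ' |x|)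
    (hx : x ≠ 0) : HasDerivAt (fun s => sign s * φ |s|) φ' x := by
  rcases hx.lt_or_gt with hneg | hpos
  · rw [abs_of_neg hneg] at hφ
    have hodd : (fun s => -φ (-s)) =ᶠ[nhds x] fun s => sign s * φ |s| := by
      filter_upwards [eventually_lt_nhds hneg] with s hs
      rw [sign_of_neg hs, abs_of_neg hs, neg_one_mul]
    simpa using (hφ.comp x (hasDerivAt_neg x)).neg.congr_of_eventuallyEq hodd.symm
  · rw [abs_of_pos hpos] at hφ
    have hid : φ =ᶠ[nhds x] fun s => sign s * φ |s| := by
      filter_upwards [eventually_gt_nhds hpos] with s hs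
      rw [sign_of_pos hs, abs_of_pos hs, one_mul]
    exact hφ.congr_of_eventuallyEq hid.symm

theorem powerTower_comp_hasDerivAt_general (α : ℝ)
    (a : ℝ → ℝ) (t a' : ℝ) (ha : HasDerivAt a a' t) (hne : a t ≠ 0) :
    HasDerivAt (fun s : ℝ => Real.sign (a s) * |a s| ^ (|a s| ^ α))
      (|a t| ^ (|a t| ^ α + α - 1) * (1 + α * Real.log |a t|) * a') t :=
  ((hasDerivAt_rpow_self_rpow α (abs_pos.mpr hne)).sign_mul_comp_abs hne).comp t ha

/-- Lemma 1: if a is differentiable at t with a(t) ≠ 0 then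
t ↦ sign(a(t))·|a(t)|^(|a(t)|^α) is differentiable at t with derivative
|a(t)|^(|a(t)|^α + α − 1)·(1 + α·ln|a(t)|)·a'(t). -/
theorem powerTower_comp_hasDerivAt (α : ℝ) (hα : 0 < α)
    (a : ℝ → ℝ) (t a' : ℝ) (ha : HasDerivAt a a' t) (hne : a t ≠ 0) :
    HasDerivAt (fun s : ℝ => Real.sign (a s) * |a s| ^ (|a s| ^ α))
      (|a t| ^ (|a t| ^ α + α - 1) * (1 + α * Real.log |a t|) * a') t :=
  powerTower_comp_hasDerivAt_general α a t a' ha hne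
end

section
/- Let β > 1 and K₁ > 0 be real constants. Let x₁, x₂, u : ℝ → ℝ with x₁, x₂ differentiable at a time t, ẋ₁(t) = x₂(t), ẋ₂(t) = u(t), and x₁(t) ≠ 0. Define z₂ = x₂ + K₁·sign(x₁)·|x₁|^(|x₁|^β). Then z₂ is differentiable at t with ż₂(t) = u(t) + K₁·|x₁(t)|^(|x₁(t)|^β + β − 1)·(1 + β·ln|x₁(t)|)·ẋ₁(t). -/
/-! The factor `sign x₁` cancels the sign produced by differentiating `|x₁|`, so
`K₁ · sign x₁ · |x₁|^(|x₁|^β)` differentiates like `y ↦ y ^ y ^ β` at `y = |x₁|`, whose derivative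
`y^β · y^(y^β - 1) + β y^(β-1) · y^(y^β) · log y` collects to `y^(y^β + β - 1) (1 + β log y)`. -/

open Real

theorem hasDerivAt_rpow_rpow_self {β y : ℝ} (hy : 0 < y) :
    HasDerivAt (fun y : ℝ => y ^ y ^ β) (y ^ (y ^ β + β - 1) * (1 + β * log y)) y := by
  have h := (hasDerivAt_id' y).rpow (hasDerivAt_rpow_const (p := β) (Or.inl hy.ne')) hy
  have e₁ : y ^ (y ^ β + β - 1) = y ^ β * y ^ (y ^ β - 1) := by rw [← rpow_add hy]; ring_nf
  have e₂ : y ^ (y ^ β + β - 1) = y ^ (β - 1) * y ^ y ^ β := by rw [← rpow_add hy]; ring_nf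
  convert h using 1
  linear_combination e₁ + β * log y * e₂

theorem HasDerivAt.sign_mul_comp_abs_s5 {f : ℝ → ℝ} {f' x : ℝ} (hf : HasDerivAt f f' |x|)
    (hx : x ≠ 0) : HasDerivAt (fun y => Real.sign y * f |y|) f' x := by
  rcases hx.lt_or_gt with hneg | hpos
  · rw [abs_of_neg hneg] at hf
    have h := (hf.comp x (hasDerivAt_neg x)).neg
    rw [mul_neg_one, neg_neg] at h
    refine h.congr_of_eventuallyEq ?_
    filter_upwards [Iio_mem_nhds hneg] with y hy
    simp [Real.sign_of_neg hy, abs_of_neg (Set.mem_Iio.mp hy)]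
  · rw [abs_of_pos hpos] at hf
    refine hf.congr_of_eventuallyEq ?_
    filter_upwards [Ioi_mem_nhds hpos] with y hy
    simp [Real.sign_of_pos hy, abs_of_pos (Set.mem_Ioi.mp hy)]

theorem backstepping_error_deriv_general (β K₁ : ℝ)
    (x₁ x₂ u : ℝ → ℝ) (t x₁' x₂' : ℝ)
    (hx₁ : HasDerivAt x₁ x₁' t) (hx₂ : HasDerivAt x₂ x₂' t)
    (h2 : x₂' = u t) (hne : x₁ t ≠ 0) :
    HasDerivAt (fun s : ℝ => x₂ s + K₁ * Real.sign (x₁ s) * |x₁ s| ^ (|x₁ s| ^ β))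
      (u t + K₁ * |x₁ t| ^ (|x₁ t| ^ β + β - 1) * (1 + β * Real.log |x₁ t|) * x₁') t := by
  have hodd := (hasDerivAt_rpow_rpow_self (β := β) (abs_pos.mpr hne)).sign_mul_comp_abs_s5 hne
  have h : HasDerivAt (fun s => x₂ s + K₁ * (Real.sign (x₁ s) * |x₁ s| ^ |x₁ s| ^ β))
      (x₂' + K₁ * (|x₁ t| ^ (|x₁ t| ^ β + β - 1) * (1 + β * log |x₁ t|) * x₁')) t :=
    hx₂.add ((hodd.comp t hx₁).const_mul K₁)
  simpa only [← mul_assoc, h2] using h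

/-- Second backstepping step: derivative of the error z₂ = x₂ + K₁·sign(x₁)·|x₁|^(|x₁|^β)
along the double integrator ẋ₁ = x₂, ẋ₂ = u, when x₁(t) ≠ 0:
ż₂ = u + K₁·|x₁|^(|x₁|^β + β − 1)·(1 + β·ln|x₁|)·ẋ₁. -/
theorem backstepping_error_deriv (β K₁ : ℝ) (hβ : 1 < β) (hK₁ : 0 < K₁)
    (x₁ x₂ u : ℝ → ℝ) (t x₁' x₂' : ℝ)
    (hx₁ : HasDerivAt x₁ x₁' t) (hx₂ : HasDerivAt x₂ x₂' t)
    (h1 : x₁' = x₂ t) (h2 : x₂' = u t) (hne : x₁ t ≠ 0) :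
    HasDerivAt (fun s : ℝ => x₂ s + K₁ * Real.sign (x₁ s) * |x₁ s| ^ (|x₁ s| ^ β))
      (u t + K₁ * |x₁ t| ^ (|x₁ t| ^ β + β - 1) * (1 + β * Real.log |x₁ t|) * x₁') t :=
  backstepping_error_deriv_general β K₁ x₁ x₂ u t x₁' x₂' hx₁ hx₂ h2 hne
end

section
/- Let β > 1, γ > 0, K₁ > 0, K₂ > 0. For any continuously differentiable solution (x₁, x₂) : [0,∞) → ℝ² of the closed-loop double integrator ẋ₁ = x₂, ẋ₂ = u with d = 0 and u = −K₂·sign(z₂)·|z₂|^(|z₂|^γ) − ( x₁ + K₁·|x₁|^(|x₁|^β + β − 1)·(1 + β·ln|x₁|)·(−K₁·sign(x₁)·|x₁|^(|x₁|^β) + z₂) ), where z₂ = x₂ + K₁·sign(x₁)·|x₁|^(|x₁|^β), there exists a finite time T ≥ 0 such that x₁(t) = 0 and x₂(t) = 0 for all t ≥ T. -/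
/-- Backstepping error z₂ = x₂ + K₁·sign(x₁)·|x₁|^(|x₁|^β). -/
noncomputable def ptError (β K₁ : ℝ) (x₁ x₂ : ℝ → ℝ) (t : ℝ) : ℝ :=
  x₂ t + K₁ * Real.sign (x₁ t) * |x₁ t| ^ (|x₁ t| ^ β)

/-- Power tower backstepping control law (Theorem 1, d = 0). -/
noncomputable def ptControl (β γ K₁ K₂ : ℝ) (x₁ x₂ : ℝ → ℝ) (t : ℝ) : ℝ :=
  -K₂ * Real.sign (ptError β K₁ x₁ x₂ t) *
      |ptError β K₁ x₁ x₂ t| ^ (|ptError β K₁ x₁ x₂ t| ^ γ) -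
    (x₁ t + K₁ * |x₁ t| ^ (|x₁ t| ^ β + β - 1) * (1 + β * Real.log |x₁ t|) *
      (-K₁ * Real.sign (x₁ t) * |x₁ t| ^ (|x₁ t| ^ β) + ptError β K₁ x₁ x₂ t))

/-!
Write `z = ptError = x₂ + K₁ ⌈x₁⌋^(|x₁|^β)`. Where `x₁ ≠ 0` the closed loop becomes
`ẋ₁ = z - K₁ ⌈x₁⌋^(|x₁|^β)`, `ż = -K₂ ⌈z⌋^(|z|^γ) - x₁`, and since `|y|^(|y|^p) ≥ exp (-1/p)`,
the function `√(x₁² + z²)` decreases at a rate bounded away from `0`; so `x₁` vanishes at some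
`t₀ > 0`.

At a zero of `x₁` with `x₂ = a > 0` the error `z` jumps from `a - K₁` to `a + K₁`, whereas
continuity of `ẋ₂` forces `⌈z⌋^(|z|^γ)` to be continuous there. Then
`y ↦ y^(y^γ) = exp ((w log w) / γ)`, `w = y^γ`, would take one value at three points of `[0, ∞)`,
which the strict convexity of `w log w` forbids. Hence `x₂ = 0` wherever `x₁ = 0`. If `x₁` left
`0` after `t₀`, then at its last zero `s` the state is at rest, `z → ±K₁` just after `s`, and `ẋ₂`
pushes `x₁` back towards `0` before it can leave.
-/

open Real Filter Set Topology

-- Since `0 ^ 0 = 1`, `absTower p` is continuous for `p > 0`, while `signTower p` jumps at `0`.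
noncomputable def absTower (p y : ℝ) : ℝ := |y| ^ (|y| ^ p)

noncomputable def signTower (p y : ℝ) : ℝ := Real.sign y * absTower p y

noncomputable def signTowerDeriv (p y : ℝ) : ℝ := |y| ^ (|y| ^ p + p - 1) * (1 + p * log |y|)

section Tower

variable {p : ℝ}

theorem absTower_eq_exp (hp : 0 < p) (y : ℝ) :
    absTower p y = exp (|y| ^ p * log (|y| ^ p) / p) := by
  rcases eq_or_ne y 0 with rfl | hy
  · simp [absTower, zero_rpow hp.ne']
  have hy' : 0 < |y| := abs_pos.2 hy
  rw [absTower, rpow_def_of_pos hy', log_rpow hy']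
  field_simp

theorem absTower_zero (hp : 0 < p) : absTower p 0 = 1 := by
  simp [absTower_eq_exp hp, zero_rpow hp.ne']

theorem absTower_pos (hp : 0 < p) (y : ℝ) : 0 < absTower p y := by
  rw [absTower_eq_exp hp]
  exact exp_pos _

theorem continuous_absTower (hp : 0 < p) : Continuous (absTower p) := by
  simp only [funext (absTower_eq_exp hp)]
  exact ((continuous_abs.rpow_const fun _ => Or.inr hp.le).mul_log.div_const p).rexp

theorem exp_neg_inv_le_absTower (hp : 0 < p) (y : ℝ) : exp (-1 / p) ≤ absTower p y := by
  rw [absTower_eq_exp hp, exp_le_exp]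
  have h := self_sub_one_le_mul_log (rpow_nonneg (abs_nonneg y) p)
  have h0 := rpow_nonneg (abs_nonneg y) p
  exact div_le_div_of_nonneg_right (by linarith) hp.le

theorem absTower_ne_of_eq_of_lt (hp : 0 < p) {x y z : ℝ} (hx : 0 ≤ x) (hxy : x < y) (hyz : y < z)
    (h : absTower p x = absTower p y) : absTower p y ≠ absTower p z := by
  have hy : 0 ≤ y := hx.trans hxy.le
  have hz : 0 ≤ z := hy.trans hyz.le
  have mul_log_eq {a b : ℝ} (ha : 0 ≤ a) (hb : 0 ≤ b) (hab : absTower p a = absTower p b) :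
      a ^ p * log (a ^ p) = b ^ p * log (b ^ p) := by
    rwa [absTower_eq_exp hp, absTower_eq_exp hp, abs_of_nonneg ha, abs_of_nonneg hb, exp_eq_exp,
      div_left_inj' hp.ne'] at hab
  intro h'
  have hslope := strictConvexOn_mul_log.slope_strict_mono_adjacent
    (rpow_nonneg hx p) (rpow_nonneg hz p) (rpow_lt_rpow hx hxy hp) (rpow_lt_rpow hy hyz hp)
  rw [mul_log_eq hx hy h, mul_log_eq hy hz h', sub_self, zero_div, zero_div] at hslope
  exact hslope.false

theorem signTower_zero : signTower p 0 = 0 := by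
  simp [signTower]

theorem signTower_neg (y : ℝ) : signTower p (-y) = -signTower p y := by
  simp [signTower, absTower, Real.sign_neg]

theorem signTower_of_pos {y : ℝ} (hy : 0 < y) : signTower p y = absTower p y := by
  rw [signTower, Real.sign_of_pos hy, one_mul]

theorem pos_of_signTower_pos {y : ℝ} (h : 0 < signTower p y) : 0 < y := by
  by_contra! hy
  rcases hy.lt_or_eq with hy | rfl
  · have : 0 ≤ absTower p y := rpow_nonneg (abs_nonneg y) _
    rw [signTower, Real.sign_of_neg hy] at h
    linarith
  · rw [signTower_zero] at h
    exact h.false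

theorem mul_signTower (y : ℝ) : y * signTower p y = |y| * absTower p y := by
  rcases lt_trichotomy y 0 with hy | rfl | hy
  · rw [signTower, Real.sign_of_neg hy, abs_of_neg hy]
    ring
  · simp
  · rw [signTower_of_pos hy, abs_of_pos hy]

theorem absTower_eq_of_tendsto_signTower {ι : Type*} {l : Filter ι} [l.NeBot] {z : ι → ℝ}
    {w L : ℝ} (hp : 0 < p) (hz : Tendsto z l (𝓝 w))
    (hψ : Tendsto (fun i => signTower p (z i)) l (𝓝 L)) (hL : 0 < L) :
    0 ≤ w ∧ absTower p w = L := by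
  have hpos : ∀ᶠ i in l, 0 < z i :=
    (hψ.eventually (lt_mem_nhds hL)).mono fun i hi => pos_of_signTower_pos hi
  refine ⟨ge_of_tendsto hz (hpos.mono fun i hi => hi.le), tendsto_nhds_unique
    ((continuous_absTower hp).continuousAt.tendsto.comp hz) (hψ.congr' ?_)⟩
  filter_upwards [hpos] with i hi
  exact signTower_of_pos hi

theorem exp_neg_inv_mul_abs_le_mul_signTower (hp : 0 < p) (y : ℝ) :
    exp (-1 / p) * |y| ≤ y * signTower p y := by
  rw [mul_signTower, mul_comm]
  exact mul_le_mul_of_nonneg_left (exp_neg_inv_le_absTower hp y) (abs_nonneg y)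

theorem hasDerivAt_signTower_of_pos {y : ℝ} (hy : 0 < y) :
    HasDerivAt (signTower p) (signTowerDeriv p y) y := by
  have h := (hasDerivAt_id y).rpow (hasDerivAt_rpow_const (p := p) (Or.inl hy.ne')) hy
  have e₁ : y ^ (y ^ p + p - 1) = y ^ p * y ^ (y ^ p - 1) := by
    rw [← rpow_add hy]; ring_nf
  have e₂ : y ^ (y ^ p + p - 1) = y ^ (p - 1) * y ^ y ^ p := by
    rw [← rpow_add hy]; ring_nf
  refine (h.congr_of_eventuallyEq ?_).congr_deriv ?_
  · filter_upwards [eventually_gt_nhds hy] with u hu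
    rw [signTower_of_pos hu, absTower, abs_of_pos hu, id]
  · rw [signTowerDeriv, abs_of_pos hy, id]
    linear_combination -e₁ - p * log y * e₂

theorem hasDerivAt_signTower {y : ℝ} (hy : y ≠ 0) :
    HasDerivAt (signTower p) (signTowerDeriv p y) y := by
  rcases hy.lt_or_gt with hy | hy
  · have h : HasDerivAt (fun u => -signTower p (-u)) (-(signTowerDeriv p (-y) * -1)) y :=
      ((hasDerivAt_signTower_of_pos (neg_pos.2 hy)).comp y (hasDerivAt_neg y)).neg
    simpa [signTower_neg, signTowerDeriv] using h
  · exact hasDerivAt_signTower_of_pos hy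

theorem signTowerDeriv_eq (hp : 1 < p) (y : ℝ) :
    signTowerDeriv p y = absTower p y *
      (|y| ^ (p - 1) + p / (p - 1) * (|y| ^ (p - 1) * log (|y| ^ (p - 1)))) := by
  have hp₁ : p - 1 ≠ 0 := by linarith
  rcases eq_or_ne y 0 with rfl | hy
  · simp [signTowerDeriv, zero_rpow (by linarith : p ≠ 0), zero_rpow hp₁]
  have hy' : 0 < |y| := abs_pos.2 hy
  rw [signTowerDeriv, absTower, log_rpow hy', show |y| ^ p + p - 1 = |y| ^ p + (p - 1) by ring,
    rpow_add hy']
  field_simp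

theorem continuous_signTowerDeriv (hp : 1 < p) : Continuous (signTowerDeriv p) := by
  have hc : Continuous fun y : ℝ => |y| ^ (p - 1) :=
    continuous_abs.rpow_const fun _ => Or.inr (by linarith)
  simp only [funext (signTowerDeriv_eq hp)]
  exact (continuous_absTower (by linarith)).mul (hc.add (continuous_const.mul hc.mul_log))

theorem signTowerDeriv_zero (hp : 1 < p) : signTowerDeriv p 0 = 0 := by
  simp [signTowerDeriv, zero_rpow (by linarith : p ≠ 0), zero_rpow (by linarith : p - 1 ≠ 0)]

end Tower

theorem exists_neg_of_hasDerivAt_le_neg {f f' : ℝ → ℝ} {a c : ℝ} (hc : 0 < c)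
    (hf : ∀ t ≥ a, HasDerivAt f (f' t) t) (hf' : ∀ t ≥ a, f' t ≤ -c) : ∃ t ≥ a, f t < 0 := by
  have hanti : AntitoneOn (fun t => f t + c * t) (Ici a) := by
    refine antitoneOn_of_hasDerivWithinAt_nonpos (f' := fun t => f' t + c * 1) (convex_Ici a)
      (fun t ht => ((hf t ht).continuousAt.add (continuousAt_const.mul continuousAt_id))
        |>.continuousWithinAt) (fun t ht => ?_) (fun t ht => ?_)
    · exact ((hf t (interior_subset ht)).add ((hasDerivAt_id t).const_mul c)).hasDerivWithinAt
    · linarith [hf' t (interior_subset ht)]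
  set T := a + (|f a| + 1) / c
  have haT : a ≤ T := le_add_of_nonneg_right (by positivity)
  refine ⟨T, haT, ?_⟩
  have h := hanti (le_refl a) haT haT
  have hcT : c * T = c * a + (|f a| + 1) := by
    simp only [T]
    field_simp
  simp only [hcT] at h
  linarith [le_abs_self (f a)]

theorem exists_eq_zero_forall_pos_Ioc {f : ℝ → ℝ} {a b : ℝ} (hab : a ≤ b)
    (hf : ContinuousOn f (Icc a b)) (ha : f a = 0) (hb : 0 < f b) :
    ∃ s ∈ Ico a b, f s = 0 ∧ ∀ t ∈ Ioc s b, 0 < f t := by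
  have hZ : IsCompact (Icc a b ∩ f ⁻¹' {0}) := isCompact_Icc.of_isClosed_subset
    (hf.preimage_isClosed_of_isClosed isClosed_Icc isClosed_singleton) inter_subset_left
  obtain ⟨s, ⟨hs, hfs⟩, hmax⟩ := hZ.exists_isGreatest ⟨a, left_mem_Icc.2 hab, ha⟩
  have hsb : s < b := hs.2.lt_of_ne (by rintro rfl; exact hb.ne' hfs)
  refine ⟨s, ⟨hs.1, hsb⟩, hfs, fun t ht => ?_⟩
  by_contra! hft
  obtain ⟨c, hc, hfc⟩ := intermediate_value_Icc ht.2
    (hf.mono (Icc_subset_Icc (hs.1.trans ht.1.le) le_rfl)) ⟨hft, hb.le⟩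
  exact (ht.1.trans_le hc.1).not_ge (hmax ⟨⟨hs.1.trans (ht.1.le.trans hc.1), hc.2⟩, hfc⟩)

section ClosedLoop

variable {β γ K₁ K₂ : ℝ} {x₁ x₂ : ℝ → ℝ}

variable (β K₁ x₁ x₂) in
theorem ptError_eq (t : ℝ) : ptError β K₁ x₁ x₂ t = x₂ t + K₁ * signTower β (x₁ t) := by
  rw [ptError, signTower, absTower, mul_assoc]

variable (β γ K₁ K₂ x₁ x₂) in
theorem ptControl_add_signTower (t : ℝ) :
    ptControl β γ K₁ K₂ x₁ x₂ t + K₂ * signTower γ (ptError β K₁ x₁ x₂ t) =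
      -(x₁ t + K₁ * signTowerDeriv β (x₁ t) * x₂ t) := by
  simp only [ptControl, signTower, absTower, signTowerDeriv, ptError]
  ring

theorem ptError_neg : ptError β K₁ (-x₁) (-x₂) = -ptError β K₁ x₁ x₂ := by
  ext t
  simp only [ptError_eq, Pi.neg_apply, signTower_neg]
  ring

theorem ptControl_neg : ptControl β γ K₁ K₂ (-x₁) (-x₂) = -ptControl β γ K₁ K₂ x₁ x₂ := by
  ext t
  have h := ptControl_add_signTower β γ K₁ K₂ x₁ x₂ t
  have h' := ptControl_add_signTower β γ K₁ K₂ (-x₁) (-x₂) t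
  have heven : signTowerDeriv β (-x₁ t) = signTowerDeriv β (x₁ t) := by simp [signTowerDeriv]
  simp only [ptError_neg, Pi.neg_apply, signTower_neg, heven] at h' ⊢
  linarith

theorem hasDerivAt_ptError {t : ℝ} (hx : x₁ t ≠ 0) (h₁ : HasDerivAt x₁ (x₂ t) t)
    (h₂ : HasDerivAt x₂ (ptControl β γ K₁ K₂ x₁ x₂ t) t) :
    HasDerivAt (ptError β K₁ x₁ x₂) (-K₂ * signTower γ (ptError β K₁ x₁ x₂ t) - x₁ t) t := by
  have h := h₂.add (((hasDerivAt_signTower (p := β) hx).comp t h₁).const_mul K₁)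
  refine (h.congr_of_eventuallyEq (.of_eq (funext (ptError_eq β K₁ x₁ x₂)))).congr_deriv ?_
  linear_combination ptControl_add_signTower β γ K₁ K₂ x₁ x₂ t

theorem hasDerivAt_sq_add_ptError_sq {t : ℝ} (hx : x₁ t ≠ 0) (h₁ : HasDerivAt x₁ (x₂ t) t)
    (h₂ : HasDerivAt x₂ (ptControl β γ K₁ K₂ x₁ x₂ t) t) :
    HasDerivAt (fun τ => x₁ τ ^ 2 + ptError β K₁ x₁ x₂ τ ^ 2)
      (-2 * (K₁ * (x₁ t * signTower β (x₁ t)) +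
        K₂ * (ptError β K₁ x₁ x₂ t * signTower γ (ptError β K₁ x₁ x₂ t)))) t := by
  refine ((h₁.pow 2).add ((hasDerivAt_ptError hx h₁ h₂).pow 2)).congr_deriv ?_
  push_cast
  linear_combination (-2 * x₁ t) * ptError_eq β K₁ x₁ x₂ t

theorem min_mul_sqrt_le_add_mul_signTower (hβ : 0 < β) (hγ : 0 < γ) (hK₁ : 0 ≤ K₁)
    (hK₂ : 0 ≤ K₂) (a b : ℝ) :
    min (K₁ * exp (-1 / β)) (K₂ * exp (-1 / γ)) * √(a ^ 2 + b ^ 2) ≤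
      K₁ * (a * signTower β a) + K₂ * (b * signTower γ b) := by
  set c := min (K₁ * exp (-1 / β)) (K₂ * exp (-1 / γ))
  have hc : 0 ≤ c := le_min (by positivity) (by positivity)
  have hsqrt : √(a ^ 2 + b ^ 2) ≤ |a| + |b| := (sqrt_le_left (by positivity)).2 (by
    nlinarith [sq_abs a, sq_abs b, abs_nonneg a, abs_nonneg b])
  calc c * √(a ^ 2 + b ^ 2) ≤ c * |a| + c * |b| := by nlinarith
    _ ≤ K₁ * (exp (-1 / β) * |a|) + K₂ * (exp (-1 / γ) * |b|) := by
      rw [← mul_assoc, ← mul_assoc]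
      gcongr
      exacts [min_le_left _ _, min_le_right _ _]
    _ ≤ K₁ * (a * signTower β a) + K₂ * (b * signTower γ b) :=
      add_le_add (mul_le_mul_of_nonneg_left (exp_neg_inv_mul_abs_le_mul_signTower hβ a) hK₁)
        (mul_le_mul_of_nonneg_left (exp_neg_inv_mul_abs_le_mul_signTower hγ b) hK₂)

theorem tendsto_ptError {l : Filter ℝ} {s σ : ℝ} (hβ : 0 < β) (hl : l ≤ 𝓝 s)
    (hx₁ : ContinuousAt x₁ s) (hx₂ : ContinuousAt x₂ s) (h₀ : x₁ s = 0)
    (hσ : ∀ᶠ t in l, Real.sign (x₁ t) = σ) :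
    Tendsto (ptError β K₁ x₁ x₂) l (𝓝 (x₂ s + K₁ * σ)) := by
  have hT := ((continuous_absTower hβ).continuousAt.comp hx₁).tendsto.mono_left hl
  rw [Function.comp_apply, h₀, absTower_zero hβ] at hT
  have h := (hx₂.tendsto.mono_left hl).add (hT.const_mul (K₁ * σ))
  rw [mul_one] at h
  refine h.congr' ?_
  filter_upwards [hσ] with t ht
  rw [ptError_eq, signTower, ht, Function.comp_apply]
  ring

variable (γ K₁ K₂) in
theorem continuousAt_ptControl_add_signTower {s : ℝ} (hβ : 1 < β) (hx₁ : ContinuousAt x₁ s)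
    (hx₂ : ContinuousAt x₂ s) :
    ContinuousAt
      (fun t => ptControl β γ K₁ K₂ x₁ x₂ t + K₂ * signTower γ (ptError β K₁ x₁ x₂ t)) s := by
  simp only [ptControl_add_signTower]
  exact (hx₁.add ((continuousAt_const.mul
    ((continuous_signTowerDeriv hβ).continuousAt.comp hx₁)).mul hx₂)).neg

theorem ptControl_add_signTower_of_eq_zero {s : ℝ} (hβ : 1 < β) (h₀ : x₁ s = 0) :
    ptControl β γ K₁ K₂ x₁ x₂ s + K₂ * signTower γ (ptError β K₁ x₁ x₂ s) = 0 := by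
  simp [ptControl_add_signTower, h₀, signTowerDeriv_zero hβ]

structure IsPTSolution (β γ K₁ K₂ : ℝ) (x₁ x₂ : ℝ → ℝ) : Prop where
  hasDerivAt_x₁ : ∀ t ≥ (0 : ℝ), HasDerivAt x₁ (x₂ t) t
  hasDerivAt_x₂ : ∀ t ≥ (0 : ℝ), HasDerivAt x₂ (ptControl β γ K₁ K₂ x₁ x₂ t) t
  continuousOn_ptControl : ContinuousOn (ptControl β γ K₁ K₂ x₁ x₂) (Ioi 0)

namespace IsPTSolution

theorem of_contDiffOn (hC : ContDiffOn ℝ 1 x₂ (Ici 0)) (h₁ : ∀ t ≥ (0 : ℝ), HasDerivAt x₁ (x₂ t) t)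
    (h₂ : ∀ t ≥ (0 : ℝ), HasDerivAt x₂ (ptControl β γ K₁ K₂ x₁ x₂ t) t) :
    IsPTSolution β γ K₁ K₂ x₁ x₂ where
  hasDerivAt_x₁ := h₁
  hasDerivAt_x₂ := h₂
  continuousOn_ptControl :=
    ((hC.mono Ioi_subset_Ici_self).continuousOn_deriv_of_isOpen isOpen_Ioi le_rfl).congr
      fun t ht => (h₂ t (le_of_lt ht)).deriv.symm

theorem neg (h : IsPTSolution β γ K₁ K₂ x₁ x₂) : IsPTSolution β γ K₁ K₂ (-x₁) (-x₂) where
  hasDerivAt_x₁ t ht := (h.hasDerivAt_x₁ t ht).neg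
  hasDerivAt_x₂ t ht := by
    rw [ptControl_neg]
    exact (h.hasDerivAt_x₂ t ht).neg
  continuousOn_ptControl := by
    rw [ptControl_neg]
    exact h.continuousOn_ptControl.neg

theorem exists_x₁_eq_zero (h : IsPTSolution β γ K₁ K₂ x₁ x₂) (hβ : 0 < β) (hγ : 0 < γ)
    (hK₁ : 0 < K₁) (hK₂ : 0 < K₂) : ∃ t > 0, x₁ t = 0 := by
  by_contra! hx
  set c := min (K₁ * exp (-1 / β)) (K₂ * exp (-1 / γ))
  have hc : 0 < c := lt_min (by positivity) (by positivity)
  set V := fun τ => x₁ τ ^ 2 + ptError β K₁ x₁ x₂ τ ^ 2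
  set V' := fun τ => -2 * (K₁ * (x₁ τ * signTower β (x₁ τ)) +
    K₂ * (ptError β K₁ x₁ x₂ τ * signTower γ (ptError β K₁ x₁ x₂ τ)))
  have hV : ∀ t ≥ 1, 0 < V t := fun t ht => by
    have := hx t (by linarith)
    positivity
  obtain ⟨t, -, ht⟩ := exists_neg_of_hasDerivAt_le_neg hc (a := 1) (f := fun τ => √(V τ))
    (f' := fun τ => V' τ / (2 * √(V τ)))
    (fun t ht => (hasDerivAt_sq_add_ptError_sq (hx t (by linarith))
      (h.hasDerivAt_x₁ t (by linarith)) (h.hasDerivAt_x₂ t (by linarith))).sqrt (hV t ht).ne')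
    (fun t ht => by
      rw [div_le_iff₀ (by positivity [sqrt_pos.2 (hV t ht)])]
      nlinarith [min_mul_sqrt_le_add_mul_signTower hβ hγ hK₁.le hK₂.le (x₁ t)
        (ptError β K₁ x₁ x₂ t)])
  exact (sqrt_nonneg _).not_gt ht

theorem x₂_nonpos_of_x₁_eq_zero (h : IsPTSolution β γ K₁ K₂ x₁ x₂) (hβ : 1 < β) (hγ : 0 < γ)
    (hK₁ : 0 < K₁) (hK₂ : 0 < K₂) {t₀ : ℝ} (ht₀ : 0 < t₀) (hx : x₁ t₀ = 0) : x₂ t₀ ≤ 0 := by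
  by_contra! ha
  have hx₁ := (h.hasDerivAt_x₁ t₀ ht₀.le).continuousAt
  have hx₂ := (h.hasDerivAt_x₂ t₀ ht₀.le).continuousAt
  have hψ : ContinuousAt (fun t => signTower γ (ptError β K₁ x₁ x₂ t)) t₀ := by
    refine (((continuousAt_ptControl_add_signTower γ K₁ K₂ hβ hx₁ hx₂).sub
      (h.continuousOn_ptControl.continuousAt (Ioi_mem_nhds ht₀))).div_const K₂).congr
      (.of_forall fun t => ?_)
    simp [hK₂.ne']
  have hz₀ : ptError β K₁ x₁ x₂ t₀ = x₂ t₀ := by simp [ptError_eq, hx, signTower_zero]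
  rw [ContinuousAt, hz₀] at hψ
  have hslope := (hasDerivAt_iff_tendsto_slope.mp (h.hasDerivAt_x₁ t₀ ht₀.le)).eventually
    (eventually_gt_nhds ha)
  have hright : ∀ᶠ t in 𝓝[>] t₀, Real.sign (x₁ t) = 1 := by
    filter_upwards [nhdsGT_le_nhdsNE t₀ hslope, self_mem_nhdsWithin] with t hs ht
    exact Real.sign_of_pos (pos_of_slope_pos ht hs hx)
  have hleft : ∀ᶠ t in 𝓝[<] t₀, Real.sign (x₁ t) = -1 := by
    filter_upwards [nhdsLT_le_nhdsNE t₀ hslope, self_mem_nhdsWithin] with t hs ht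
    exact Real.sign_of_neg (neg_of_slope_pos ht hs hx)
  have hψ₀ : 0 < signTower γ (x₂ t₀) := by
    rw [signTower_of_pos ha]
    exact absTower_pos hγ _
  obtain ⟨-, hR⟩ := absTower_eq_of_tendsto_signTower hγ
    (tendsto_ptError (by linarith) nhdsWithin_le_nhds hx₁ hx₂ hx hright)
    (hψ.mono_left nhdsWithin_le_nhds) hψ₀
  obtain ⟨hL₀, hL⟩ := absTower_eq_of_tendsto_signTower hγ
    (tendsto_ptError (by linarith) nhdsWithin_le_nhds hx₁ hx₂ hx hleft)
    (hψ.mono_left nhdsWithin_le_nhds) hψ₀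
  rw [signTower_of_pos ha] at hR hL
  exact absTower_ne_of_eq_of_lt hγ hL₀ (by linarith) (by linarith) hL hR.symm

theorem x₂_eq_zero_of_x₁_eq_zero (h : IsPTSolution β γ K₁ K₂ x₁ x₂) (hβ : 1 < β) (hγ : 0 < γ)
    (hK₁ : 0 < K₁) (hK₂ : 0 < K₂) {t₀ : ℝ} (ht₀ : 0 < t₀) (hx : x₁ t₀ = 0) : x₂ t₀ = 0 := by
  have := h.neg.x₂_nonpos_of_x₁_eq_zero hβ hγ hK₁ hK₂ ht₀ (by simp [hx])
  rw [Pi.neg_apply, neg_nonpos] at this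
  exact (h.x₂_nonpos_of_x₁_eq_zero hβ hγ hK₁ hK₂ ht₀ hx).antisymm this

theorem not_forall_pos_Ioc_of_rest (h : IsPTSolution β γ K₁ K₂ x₁ x₂) (hβ : 1 < β) (hγ : 0 < γ)
    (hK₁ : 0 < K₁) (hK₂ : 0 < K₂) {s b : ℝ} (hs : 0 ≤ s) (hsb : s < b) (hx₁ : x₁ s = 0)
    (hx₂ : x₂ s = 0) : ¬ ∀ t ∈ Ioc s b, 0 < x₁ t := by
  intro hpos
  have hx₁c := (h.hasDerivAt_x₁ s hs).continuousAt
  have hx₂c := (h.hasDerivAt_x₂ s hs).continuousAt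
  have hIoc : Ioc s b ∈ 𝓝[>] s := Ioc_mem_nhdsGT hsb
  have hz : Tendsto (ptError β K₁ x₁ x₂) (𝓝[>] s) (𝓝 K₁) := by
    have := tendsto_ptError (K₁ := K₁) (σ := 1) (by linarith : 0 < β) nhdsWithin_le_nhds hx₁c
      hx₂c hx₁ (by filter_upwards [hIoc] with t ht using Real.sign_of_pos (hpos t ht))
    rwa [hx₂, zero_add, mul_one] at this
  have hψ := (hasDerivAt_signTower (p := γ) hK₁.ne').continuousAt.tendsto.comp hz
  rw [signTower_of_pos hK₁] at hψ
  have hF := (continuousAt_ptControl_add_signTower γ K₁ K₂ hβ hx₁c hx₂c).tendsto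
  rw [ptControl_add_signTower_of_eq_zero hβ hx₁] at hF
  have hu : Tendsto (ptControl β γ K₁ K₂ x₁ x₂) (𝓝[>] s) (𝓝 (0 - K₂ * absTower γ K₁)) :=
    ((hF.mono_left nhdsWithin_le_nhds).sub (hψ.const_mul K₂)).congr fun t => by
      simp only [Function.comp_apply, add_sub_cancel_right]
  have hneg : ∀ᶠ t in 𝓝[>] s, ptControl β γ K₁ K₂ x₁ x₂ t < 0 :=
    hu.eventually (gt_mem_nhds (by nlinarith [absTower_pos hγ K₁]))
  obtain ⟨δ, hδ, hδs⟩ := mem_nhdsGT_iff_exists_Ioc_subset.1 (hneg.and hIoc)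
  have hsδ : s ≤ δ := le_of_lt hδ
  have hx₂anti : StrictAntiOn x₂ (Icc s δ) :=
    strictAntiOn_of_hasDerivWithinAt_neg (convex_Icc s δ)
      (fun t ht => (h.hasDerivAt_x₂ t (hs.trans ht.1)).continuousAt.continuousWithinAt)
      (fun t ht => (h.hasDerivAt_x₂ t (hs.trans (interior_subset ht).1)).hasDerivWithinAt)
      (fun t ht => by
        rw [interior_Icc] at ht
        exact (hδs (Ioo_subset_Ioc_self ht)).1)
  have hx₁anti : StrictAntiOn x₁ (Icc s δ) :=
    strictAntiOn_of_hasDerivWithinAt_neg (convex_Icc s δ)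
      (fun t ht => (h.hasDerivAt_x₁ t (hs.trans ht.1)).continuousAt.continuousWithinAt)
      (fun t ht => (h.hasDerivAt_x₁ t (hs.trans (interior_subset ht).1)).hasDerivWithinAt)
      (fun t ht => by
        rw [interior_Icc] at ht
        rw [← hx₂]
        exact hx₂anti (left_mem_Icc.2 hsδ) (Ioo_subset_Icc_self ht) ht.1)
  have := hx₁anti (left_mem_Icc.2 hsδ) (right_mem_Icc.2 hsδ) hδ
  linarith [hpos δ (hδs (right_mem_Ioc.2 hδ)).2]

theorem x₁_nonpos_of_le (h : IsPTSolution β γ K₁ K₂ x₁ x₂) (hβ : 1 < β) (hγ : 0 < γ)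
    (hK₁ : 0 < K₁) (hK₂ : 0 < K₂) {t₀ t : ℝ} (ht₀ : 0 < t₀) (hx : x₁ t₀ = 0) (ht : t₀ ≤ t) :
    x₁ t ≤ 0 := by
  by_contra! hpos
  obtain ⟨s, hs, hxs, hpos'⟩ := exists_eq_zero_forall_pos_Ioc ht
    (fun τ hτ => (h.hasDerivAt_x₁ τ (by linarith [hτ.1])).continuousAt.continuousWithinAt)
    hx hpos
  have hs₀ : 0 < s := ht₀.trans_le hs.1
  exact h.not_forall_pos_Ioc_of_rest hβ hγ hK₁ hK₂ hs₀.le hs.2 hxs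
    (h.x₂_eq_zero_of_x₁_eq_zero hβ hγ hK₁ hK₂ hs₀ hxs) hpos'

theorem x₁_eq_zero_of_le (h : IsPTSolution β γ K₁ K₂ x₁ x₂) (hβ : 1 < β) (hγ : 0 < γ)
    (hK₁ : 0 < K₁) (hK₂ : 0 < K₂) {t₀ t : ℝ} (ht₀ : 0 < t₀) (hx : x₁ t₀ = 0) (ht : t₀ ≤ t) :
    x₁ t = 0 := by
  have := h.neg.x₁_nonpos_of_le hβ hγ hK₁ hK₂ ht₀ (by simp [hx]) ht
  rw [Pi.neg_apply, neg_nonpos] at this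
  exact (h.x₁_nonpos_of_le hβ hγ hK₁ hK₂ ht₀ hx ht).antisymm this

end IsPTSolution

end ClosedLoop

theorem powerTower_finite_time_general (β γ K₁ K₂ : ℝ) (hβ : 1 < β) (hγ : 0 < γ)
    (hK₁ : 0 < K₁) (hK₂ : 0 < K₂)
    (x₁ x₂ : ℝ → ℝ)
    (hC2 : ContDiffOn ℝ 1 x₂ (Set.Ici (0 : ℝ)))
    (hode1 : ∀ t ≥ (0 : ℝ), HasDerivAt x₁ (x₂ t) t)
    (hode2 : ∀ t ≥ (0 : ℝ), HasDerivAt x₂ (ptControl β γ K₁ K₂ x₁ x₂ t) t) :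
    ∃ T ≥ (0 : ℝ), ∀ t ≥ T, x₁ t = 0 ∧ x₂ t = 0 := by
  have h := IsPTSolution.of_contDiffOn hC2 hode1 hode2
  obtain ⟨t₀, ht₀, hx₀⟩ := h.exists_x₁_eq_zero (by linarith) hγ hK₁ hK₂
  refine ⟨t₀, ht₀.le, fun t ht => ?_⟩
  have hx := h.x₁_eq_zero_of_le hβ hγ hK₁ hK₂ ht₀ hx₀ ht
  exact ⟨hx, h.x₂_eq_zero_of_x₁_eq_zero hβ hγ hK₁ hK₂ (ht₀.trans_le ht) hx⟩

/-- Theorem 1 (finite-time convergence): every C¹ solution of the closed loop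
ẋ₁ = x₂, ẋ₂ = u with the power tower control reaches the origin in finite time
and stays there. -/
theorem powerTower_finite_time (β γ K₁ K₂ : ℝ) (hβ : 1 < β) (hγ : 0 < γ)
    (hK₁ : 0 < K₁) (hK₂ : 0 < K₂)
    (x₁ x₂ : ℝ → ℝ)
    (hC1 : ContDiffOn ℝ 1 x₁ (Set.Ici (0 : ℝ)))
    (hC2 : ContDiffOn ℝ 1 x₂ (Set.Ici (0 : ℝ)))
    (hode1 : ∀ t ≥ (0 : ℝ), HasDerivAt x₁ (x₂ t) t)
    (hode2 : ∀ t ≥ (0 : ℝ), HasDerivAt x₂ (ptControl β γ K₁ K₂ x₁ x₂ t) t) :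
    ∃ T ≥ (0 : ℝ), ∀ t ≥ T, x₁ t = 0 ∧ x₂ t = 0 :=
  powerTower_finite_time_general β γ K₁ K₂ hβ hγ hK₁ hK₂ x₁ x₂ hC2 hode1 hode2
end

section
/- For every real β > 1, the function x ↦ |x|^(β − 1)·ln|x| tends to 0 as x tends to 0 along nonzero values; consequently the feedback term k·|x₁|^(|x₁|^β + β − 1)·(1 + β·ln|x₁|)·x₂ appearing in the power-tower terminal sliding mode control law has no singularity at x₁ = 0 (its limit as x₁ → 0 is 0 for any fixed x₂ and k), in contrast with the classical terminal sliding surface s = x₂ + k·sign(x₁)·|x₁|^(q/p) with 0 < q < p. -/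
open Real Filter Topology

/- Both limits reduce to `t ^ r * log t → 0` as `t → 0⁺` for `r > 0`. For the feedback term, split
`|x| ^ (|x| ^ β + β - 1) = |x| ^ (|x| ^ β) * |x| ^ (β - 1)`: the first factor is
`exp (|x| ^ β * log |x|) → exp 0 = 1`, and the second, multiplied by `1 + β log |x|`, tends to `0`. -/

lemma tendsto_abs_rpow_mul_log_abs {r : ℝ} (hr : 0 < r) :
    Tendsto (fun x : ℝ => |x| ^ r * log |x|) (𝓝[≠] 0) (𝓝 0) := by
  simpa only [Function.comp_def, mul_comm (log _)] using
    (tendsto_log_mul_rpow_nhdsGT_zero hr).comp tendsto_abs_nhdsNE_zero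

lemma tendsto_abs_rpow_abs_rpow {r : ℝ} (hr : 0 < r) :
    Tendsto (fun x : ℝ => |x| ^ (|x| ^ r)) (𝓝[≠] 0) (𝓝 1) := by
  have h := (continuous_exp.tendsto 0).comp (tendsto_abs_rpow_mul_log_abs hr)
  rw [exp_zero] at h
  refine h.congr' ?_
  filter_upwards [self_mem_nhdsWithin] with x hx
  rw [Function.comp_apply, rpow_def_of_pos (abs_pos.mpr hx) (|x| ^ r), mul_comm]

lemma tendsto_abs_rpow_mul_one_add_mul_log_abs {r : ℝ} (hr : 0 < r) (c : ℝ) :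
    Tendsto (fun x : ℝ => |x| ^ r * (1 + c * log |x|)) (𝓝[≠] 0) (𝓝 0) := by
  have hpow : Tendsto (fun x : ℝ => |x| ^ r) (𝓝[≠] 0) (𝓝 0) := by
    simpa only [Function.comp_def, zero_rpow hr.ne'] using
      ((continuous_rpow_const hr.le).tendsto 0).comp
        (tendsto_abs_nhdsNE_zero.mono_right nhdsWithin_le_nhds)
  have h := hpow.add ((tendsto_abs_rpow_mul_log_abs hr).const_mul c)
  rw [mul_zero, add_zero] at h
  exact h.congr fun x => by ring

/-- For β > 1, |x|^(β−1)·ln|x| → 0 as x → 0 along nonzero values; consequently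
the feedback term k·|x₁|^(|x₁|^β + β − 1)·(1 + β·ln|x₁|)·x₂ of the power-tower
terminal sliding mode control has no singularity at x₁ = 0: its limit is 0. -/
theorem powerTower_terminal_no_singularity (β : ℝ) (hβ : 1 < β) :
    Filter.Tendsto (fun x : ℝ => |x| ^ (β - 1) * Real.log |x|)
      (nhdsWithin 0 {0}ᶜ) (nhds 0) ∧
    ∀ k x₂ : ℝ,
      Filter.Tendsto
        (fun x₁ : ℝ =>
          k * |x₁| ^ (|x₁| ^ β + β - 1) * (1 + β * Real.log |x₁|) * x₂)
        (nhdsWithin 0 {0}ᶜ) (nhds 0) := by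
  have hβ₁ : 0 < β - 1 := sub_pos.mpr hβ
  refine ⟨tendsto_abs_rpow_mul_log_abs hβ₁, fun k x₂ => ?_⟩
  have h := ((tendsto_abs_rpow_abs_rpow (zero_lt_one.trans hβ)).mul
    (tendsto_abs_rpow_mul_one_add_mul_log_abs hβ₁ β)).const_mul (k * x₂)
  rw [one_mul, mul_zero] at h
  refine h.congr' ?_
  filter_upwards [self_mem_nhdsWithin] with x hx
  rw [add_sub_assoc, rpow_add (abs_pos.mpr hx)]
  ring
end
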